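/- arXiv:0909.4648 — 7 statements merged into one kernel-verified Lean document; each statement's English description precedes it below -/
import Mathlib

section
/- Let U, Y be Hilbert spaces, S : U → Y bounded linear, y_d ∈ Y, and C ⊆ U nonempty closed convex. For α, β > 0 let u_α and u_β be the unique minimizers over C of u ↦ ‖Su − y_d‖² + α‖u‖² and u ↦ ‖Su − y_d‖² + β‖u‖², respectively. Then ‖u_β − u_α‖ ≤ (|α − β|/β)·‖u_α‖. In particular u_α depends continuously on α > 0. -/
/-!
Each minimizer satisfies the first-order variational inequality of its functional over `C`.
Testing the inequality for `uα` with `uβ` and vice versa and adding, the data terms combine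
into `-‖S (uβ - uα)‖² ≤ 0`, leaving `β ‖uβ - uα‖² ≤ (α - β) ⟪uα, uβ - uα⟫`;
Cauchy–Schwarz finishes.
-/

open scoped RealInnerProductSpace

section Tikhonov

variable {U Y : Type*} [NormedAddCommGroup U] [InnerProductSpace ℝ U]
  [NormedAddCommGroup Y] [InnerProductSpace ℝ Y] (S : U →L[ℝ] Y) (yd : Y)

def tikhonovFunctional (α : ℝ) (u : U) : ℝ := ‖S u - yd‖ ^ 2 + α * ‖u‖ ^ 2

theorem hasFDerivAt_tikhonovFunctional (α : ℝ) (u : U) :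
    HasFDerivAt (tikhonovFunctional S yd α)
      (2 • (innerSL ℝ (S u - yd)).comp S + α • 2 • innerSL ℝ u) u :=
  ((S.hasFDerivAt.sub_const yd).norm_sq).add
    ((hasStrictFDerivAt_norm_sq u).hasFDerivAt.const_mul α)

theorem IsMinOn.tikhonovFunctional_variational_inequality {C : Set U} (hC : Convex ℝ C)
    {α : ℝ} {u v : U} (hmin : IsMinOn (tikhonovFunctional S yd α) C u) (hu : u ∈ C)
    (hv : v ∈ C) :
    0 ≤ ⟪S u - yd, S (v - u)⟫ + α * ⟪u, v - u⟫ := by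
  have h := hmin.localize.hasFDerivWithinAt_nonneg
    (hasFDerivAt_tikhonovFunctional S yd α u).hasFDerivWithinAt
    (sub_mem_posTangentConeAt_of_segment_subset (hC.segment_subset hu hv))
  simp only [add_apply, smul_apply, ContinuousLinearMap.comp_apply, innerSL_apply_apply,
    smul_eq_mul, nsmul_eq_mul, Nat.cast_ofNat] at h
  linarith

theorem tikhonov_mul_sq_norm_sub_le {C : Set U} (hC : Convex ℝ C) {α β : ℝ} {uα uβ : U}
    (hminα : IsMinOn (tikhonovFunctional S yd α) C uα)
    (hminβ : IsMinOn (tikhonovFunctional S yd β) C uβ) (huα : uα ∈ C) (huβ : uβ ∈ C) :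
    β * ‖uβ - uα‖ ^ 2 ≤ (α - β) * ⟪uα, uβ - uα⟫ := by
  have hα := hminα.tikhonovFunctional_variational_inequality S yd hC huα huβ
  have hβ := hminβ.tikhonovFunctional_variational_inequality S yd hC huβ huα
  obtain ⟨d, rfl⟩ : ∃ d, uβ = uα + d := ⟨uβ - uα, by abel⟩
  rw [add_sub_cancel_left] at hα ⊢
  have hS : ⟪S uα - yd, S d⟫ + ⟪S (uα + d) - yd, S (uα - (uα + d))⟫ = -‖S d‖ ^ 2 := by
    simp only [map_add, sub_add_cancel_left, map_neg, inner_neg_right, add_sub_right_comm,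
      inner_add_left, real_inner_self_eq_norm_sq]
    ring
  have hu : ⟪uα + d, uα - (uα + d)⟫ = -⟪uα, d⟫ - ‖d‖ ^ 2 := by
    simp only [sub_add_cancel_left, inner_neg_right, inner_add_left, real_inner_self_eq_norm_sq]
    ring
  rw [hu] at hβ
  nlinarith [sq_nonneg ‖S d‖]

theorem tikhonov_norm_sub_le {C : Set U} (hC : Convex ℝ C) {α β : ℝ} (hβ : 0 < β) {uα uβ : U}
    (hminα : IsMinOn (tikhonovFunctional S yd α) C uα)
    (hminβ : IsMinOn (tikhonovFunctional S yd β) C uβ) (huα : uα ∈ C) (huβ : uβ ∈ C) :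
    ‖uβ - uα‖ ≤ |α - β| / β * ‖uα‖ := by
  have key := tikhonov_mul_sq_norm_sub_le S yd hC hminα hminβ huα huβ
  have hcs : (α - β) * ⟪uα, uβ - uα⟫ ≤ |α - β| * (‖uα‖ * ‖uβ - uα‖) :=
    (le_abs_self _).trans <| by
      rw [abs_mul]; gcongr; exact abs_real_inner_le_norm _ _
  rw [div_mul_eq_mul_div, le_div_iff₀ hβ]
  by_contra! h
  have hd : 0 < ‖uβ - uα‖ := (mul_pos_iff_of_pos_right hβ).1 (h.trans_le' (by positivity))
  nlinarith [mul_lt_mul_of_pos_right h hd]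

end Tikhonov

theorem tikhonov_continuous_dependence_on_parameter_general
    {U Y : Type*} [NormedAddCommGroup U] [InnerProductSpace ℝ U]
    [NormedAddCommGroup Y] [InnerProductSpace ℝ Y]
    (S : U →L[ℝ] Y) (yd : Y) (C : Set U)
    (hconv : Convex ℝ C) (α β : ℝ) (hβ : 0 < β) (uα uβ : U)
    (huα : uα ∈ C ∧ ∀ v ∈ C, ‖S uα - yd‖ ^ 2 + α * ‖uα‖ ^ 2 ≤ ‖S v - yd‖ ^ 2 + α * ‖v‖ ^ 2)
    (huβ : uβ ∈ C ∧ ∀ v ∈ C, ‖S uβ - yd‖ ^ 2 + β * ‖uβ‖ ^ 2 ≤ ‖S v - yd‖ ^ 2 + β * ‖v‖ ^ 2) :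
    ‖uβ - uα‖ ≤ (|α - β| / β) * ‖uα‖ :=
  tikhonov_norm_sub_le S yd hconv hβ (isMinOn_iff.mpr huα.2) (isMinOn_iff.mpr huβ.2) huα.1 huβ.1

/-- Continuous dependence of the Tikhonov-regularized solution on the
regularization parameter: if `u_α`, `u_β` are the minimizers over a nonempty closed
convex set `C` of `‖Su − y_d‖² + α‖u‖²` resp. `‖Su − y_d‖² + β‖u‖²` (α, β > 0), then
`‖u_β − u_α‖ ≤ (|α − β|/β)·‖u_α‖`. -/
theorem tikhonov_continuous_dependence_on_parameter
    {U Y : Type*} [NormedAddCommGroup U] [InnerProductSpace ℝ U] [CompleteSpace U]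
    [NormedAddCommGroup Y] [InnerProductSpace ℝ Y] [CompleteSpace Y]
    (S : U →L[ℝ] Y) (yd : Y) (C : Set U) (hne : C.Nonempty) (hcl : IsClosed C)
    (hconv : Convex ℝ C) (α β : ℝ) (hα : 0 < α) (hβ : 0 < β) (uα uβ : U)
    (huα : uα ∈ C ∧ ∀ v ∈ C, ‖S uα - yd‖ ^ 2 + α * ‖uα‖ ^ 2 ≤ ‖S v - yd‖ ^ 2 + α * ‖v‖ ^ 2)
    (huβ : uβ ∈ C ∧ ∀ v ∈ C, ‖S uβ - yd‖ ^ 2 + β * ‖uβ‖ ^ 2 ≤ ‖S v - yd‖ ^ 2 + β * ‖v‖ ^ 2) :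
    ‖uβ - uα‖ ≤ (|α - β| / β) * ‖uα‖ :=
  tikhonov_continuous_dependence_on_parameter_general S yd C hconv α β hβ uα uβ huα huβ
end

section
/- Let U, Y be Hilbert spaces, S : U → Y bounded linear, C ⊆ U nonempty closed convex, y_d ∈ Y, and let ū ∈ C minimize ‖Su − y_d‖² over C. Assume the source condition: there exists w ∈ Y with ū = P_C(S*w). For α > 0 let u_α minimize ‖Su − y_d‖² + α‖u‖² over C. Then ‖u_α − ū‖ ≤ √α·‖w‖ + ‖Sū − y_d‖/√α. -/
/-!
Write `e = u_α - ū`. Comparing the Tikhonov functional at `u_α` and at `ū` gives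
`‖S e‖² + α‖e‖² ≤ -2⟪Sū - y_d, S e⟫ - 2α⟪ū, e⟫`, and the variational inequality of the
source condition `ū = P_C(S*w)` bounds `-⟪ū, e⟫` by `-⟪w, S e⟫`. Hence
`‖S e‖² + α‖e‖² ≤ 2c‖S e‖` with `c = ‖Sū - y_d‖ + α‖w‖`; completing the square in `‖S e‖`
leaves `α‖e‖² ≤ c²`, i.e. `‖e‖ ≤ c/√α`.
-/

/-- `p` is the metric projection of `x` onto the nonempty closed convex set `C`,
characterized by the standard variational inequality. -/
def IsProjOn {U : Type*} [NormedAddCommGroup U] [InnerProductSpace ℝ U]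
    (C : Set U) (x p : U) : Prop :=
  p ∈ C ∧ ∀ v ∈ C, inner ℝ (x - p) (v - p) ≤ (0 : ℝ)

open ContinuousLinearMap

section Tikhonov

variable {U Y : Type*} [NormedAddCommGroup U] [InnerProductSpace ℝ U]
  [NormedAddCommGroup Y] [InnerProductSpace ℝ Y]

lemma sq_norm_map_sub_add_le_of_tikhonov_le (S : U →L[ℝ] Y) (yd : Y) (α : ℝ) {u v : U}
    (h : ‖S u - yd‖ ^ 2 + α * ‖u‖ ^ 2 ≤ ‖S v - yd‖ ^ 2 + α * ‖v‖ ^ 2) :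
    ‖S (u - v)‖ ^ 2 + α * ‖u - v‖ ^ 2 ≤
      -2 * (inner ℝ (S v - yd) (S (u - v)) + α * inner ℝ v (u - v)) := by
  have hres : S u - yd = (S v - yd) + S (u - v) := by rw [map_sub]; abel
  have hu : u = v + (u - v) := by abel
  rw [hres, norm_add_sq_real] at h
  rw [hu, norm_add_sq_real, ← hu] at h
  nlinarith

lemma inner_map_sub_le_of_isProjOn_adjoint [CompleteSpace U] [CompleteSpace Y]
    {S : U →L[ℝ] Y} {C : Set U} {w : Y} {p v : U} (hp : IsProjOn C (adjoint S w) p)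
    (hv : v ∈ C) : inner ℝ w (S (v - p)) ≤ inner ℝ p (v - p) := by
  have h := hp.2 v hv
  rw [inner_sub_left, adjoint_inner_left] at h
  linarith

end Tikhonov

lemma sqrt_mul_le_of_sq_add_mul_sq_le {x t c α : ℝ} (ht : 0 ≤ t) (hc : 0 ≤ c)
    (h : x ^ 2 + α * t ^ 2 ≤ 2 * c * x) : Real.sqrt α * t ≤ c := by
  have hsq : α * t ^ 2 ≤ c ^ 2 := by nlinarith [sq_nonneg (x - c)]
  calc Real.sqrt α * t = Real.sqrt (α * t ^ 2) := by
        rw [Real.sqrt_mul' _ (sq_nonneg t), Real.sqrt_sq ht]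
    _ ≤ Real.sqrt (c ^ 2) := Real.sqrt_le_sqrt hsq
    _ = c := Real.sqrt_sq hc

theorem tikhonov_error_estimate_general
    {U Y : Type*} [NormedAddCommGroup U] [InnerProductSpace ℝ U] [CompleteSpace U]
    [NormedAddCommGroup Y] [InnerProductSpace ℝ Y] [CompleteSpace Y]
    (S : U →L[ℝ] Y) (yd : Y) (C : Set U) (ubar : U)
    (w : Y) (hsource : IsProjOn C (ContinuousLinearMap.adjoint S w) ubar)
    (α : ℝ) (hα : 0 < α) (uα : U) (huα : uα ∈ C)
    (huαopt : ∀ v ∈ C, ‖S uα - yd‖ ^ 2 + α * ‖uα‖ ^ 2 ≤ ‖S v - yd‖ ^ 2 + α * ‖v‖ ^ 2) :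
    ‖uα - ubar‖ ≤ Real.sqrt α * ‖w‖ + ‖S ubar - yd‖ / Real.sqrt α := by
  have hfit := sq_norm_map_sub_add_le_of_tikhonov_le S yd α (huαopt ubar hsource.1)
  have hsrc := inner_map_sub_le_of_isProjOn_adjoint hsource huα
  set e := uα - ubar
  set r := S ubar - yd
  have key : ‖S e‖ ^ 2 + α * ‖e‖ ^ 2 ≤ 2 * (‖r‖ + α * ‖w‖) * ‖S e‖ :=
    calc ‖S e‖ ^ 2 + α * ‖e‖ ^ 2 ≤ -2 * (inner ℝ r (S e) + α * inner ℝ ubar e) := hfit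
      _ ≤ 2 * -inner ℝ (r + α • w) (S e) := by
        rw [inner_add_left, real_inner_smul_left]; nlinarith
      _ ≤ 2 * (‖r + α • w‖ * ‖S e‖) := by
        gcongr; exact (neg_le_abs _).trans (abs_real_inner_le_norm _ _)
      _ ≤ 2 * (‖r‖ + α * ‖w‖) * ‖S e‖ := by
        rw [mul_assoc]; gcongr
        exact (norm_add_le _ _).trans_eq (by rw [norm_smul, Real.norm_of_nonneg hα.le])
  have hbound := sqrt_mul_le_of_sq_add_mul_sq_le (norm_nonneg e) (by positivity) key
  have hs : 0 < Real.sqrt α := Real.sqrt_pos.mpr hα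
  calc ‖e‖ ≤ (‖r‖ + α * ‖w‖) / Real.sqrt α := by rw [le_div_iff₀ hs]; linarith
    _ = Real.sqrt α * ‖w‖ + ‖r‖ / Real.sqrt α := by
      rw [add_div, mul_div_right_comm, Real.div_sqrt]; ring

/-- If `ū` minimizes `‖Su − y_d‖²` over the nonempty closed convex set `C`
and satisfies the source condition `ū = P_C(S*w)`, and `u_α` minimizes the Tikhonov
functional `‖Su − y_d‖² + α‖u‖²` over `C` for `α > 0`, then
`‖u_α − ū‖ ≤ √α‖w‖ + ‖Sū − y_d‖/√α`. -/
theorem tikhonov_error_estimate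
    {U Y : Type*} [NormedAddCommGroup U] [InnerProductSpace ℝ U] [CompleteSpace U]
    [NormedAddCommGroup Y] [InnerProductSpace ℝ Y] [CompleteSpace Y]
    (S : U →L[ℝ] Y) (yd : Y) (C : Set U) (hne : C.Nonempty) (hcl : IsClosed C)
    (hconv : Convex ℝ C) (ubar : U) (hubar : ubar ∈ C)
    (hopt : ∀ v ∈ C, ‖S ubar - yd‖ ^ 2 ≤ ‖S v - yd‖ ^ 2)
    (w : Y) (hsource : IsProjOn C (ContinuousLinearMap.adjoint S w) ubar)
    (α : ℝ) (hα : 0 < α) (uα : U) (huα : uα ∈ C)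
    (huαopt : ∀ v ∈ C, ‖S uα - yd‖ ^ 2 + α * ‖uα‖ ^ 2 ≤ ‖S v - yd‖ ^ 2 + α * ‖v‖ ^ 2) :
    ‖uα - ubar‖ ≤ Real.sqrt α * ‖w‖ + ‖S ubar - yd‖ / Real.sqrt α :=
  tikhonov_error_estimate_general S yd C ubar w hsource α hα uα huα huαopt
end

section
/- Under the same assumptions (ū minimizes ‖Su − y_d‖² over the nonempty closed convex set C, ū = P_C(S*w) for some w ∈ Y, and u_α minimizes ‖Su − y_d‖² + α‖u‖² over C for α > 0), the residual satisfies ‖Su_α − y_d‖ ≤ 2α‖w‖ + ‖Sū − y_d‖. -/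
open ContinuousLinearMap

theorem le_add_of_sq_le_sq_add_mul_add {a b c : ℝ} (ha : 0 ≤ a) (hb : 0 ≤ b) (hc : 0 ≤ c)
    (h : a ^ 2 ≤ b ^ 2 + 2 * c * (a + b)) : a ≤ 2 * c + b := by
  rcases (add_nonneg ha hb).eq_or_lt with hab | hab
  · linarith
  · have : (a - b) * (a + b) ≤ 2 * c * (a + b) := by nlinarith
    linarith [le_of_mul_le_mul_right this hab]

section InnerProductSpace

variable {U : Type*} [NormedAddCommGroup U] [InnerProductSpace ℝ U]

theorem sq_norm_sub_sq_norm_le_two_inner (x y : U) :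
    ‖x‖ ^ 2 - ‖y‖ ^ 2 ≤ 2 * inner ℝ x (x - y) := by
  have h := norm_sub_sq_real x (x - y)
  rw [sub_sub_cancel] at h
  nlinarith [sq_nonneg ‖x - y‖]

theorem IsProjOn.inner_sub_le {C : Set U} {x p : U} (hp : IsProjOn C x p) {v : U} (hv : v ∈ C) :
    inner ℝ p (p - v) ≤ inner ℝ x (p - v) := by
  have h := hp.2 v hv
  rw [← neg_sub p v, inner_neg_right, inner_sub_left] at h
  linarith

variable {Y : Type*} [NormedAddCommGroup Y] [InnerProductSpace ℝ Y] [CompleteSpace U]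
  [CompleteSpace Y]

theorem IsProjOn.inner_sub_le_norm_mul_norm_map_sub {C : Set U} {S : U →L[ℝ] Y} {w : Y}
    {ubar : U} (hsource : IsProjOn C (adjoint S w) ubar) {v : U} (hv : v ∈ C) :
    inner ℝ ubar (ubar - v) ≤ ‖w‖ * ‖S ubar - S v‖ :=
  calc inner ℝ ubar (ubar - v) ≤ inner ℝ (adjoint S w) (ubar - v) := hsource.inner_sub_le hv
    _ = inner ℝ w (S ubar - S v) := by rw [adjoint_inner_left, map_sub]
    _ ≤ ‖w‖ * ‖S ubar - S v‖ := real_inner_le_norm _ _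

end InnerProductSpace

theorem tikhonov_residual_estimate_general
    {U Y : Type*} [NormedAddCommGroup U] [InnerProductSpace ℝ U] [CompleteSpace U]
    [NormedAddCommGroup Y] [InnerProductSpace ℝ Y] [CompleteSpace Y]
    (S : U →L[ℝ] Y) (yd : Y) (C : Set U) (ubar : U) (hubar : ubar ∈ C)
    (w : Y) (hsource : IsProjOn C (ContinuousLinearMap.adjoint S w) ubar)
    (α : ℝ) (hα : 0 < α) (uα : U) (huα : uα ∈ C)
    (huαopt : ∀ v ∈ C, ‖S uα - yd‖ ^ 2 + α * ‖uα‖ ^ 2 ≤ ‖S v - yd‖ ^ 2 + α * ‖v‖ ^ 2) :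
    ‖S uα - yd‖ ≤ 2 * α * ‖w‖ + ‖S ubar - yd‖ := by
  set a := ‖S uα - yd‖
  set b := ‖S ubar - yd‖
  have hfit := huαopt ubar hubar
  have hgap := sq_norm_sub_sq_norm_le_two_inner ubar uα
  have htri : ‖S ubar - S uα‖ ≤ b + a :=
    calc ‖S ubar - S uα‖ = ‖(S ubar - yd) - (S uα - yd)‖ := by rw [sub_sub_sub_cancel_right]
      _ ≤ b + a := norm_sub_le _ _
  have hsrc : inner ℝ ubar (ubar - uα) ≤ ‖w‖ * (b + a) :=
    (hsource.inner_sub_le_norm_mul_norm_map_sub huα).trans (mul_le_mul_of_nonneg_left htri (norm_nonneg w))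
  rw [mul_assoc]
  refine le_add_of_sq_le_sq_add_mul_add (norm_nonneg _) (norm_nonneg _)
    (mul_nonneg hα.le (norm_nonneg w)) ?_
  nlinarith

/-- Under the source condition `ū = P_C(S*w)` and optimality of `ū` over `C`,
the residual of the Tikhonov minimizer `u_α` over `C` satisfies
`‖Su_α − y_d‖ ≤ 2α‖w‖ + ‖Sū − y_d‖`. -/
theorem tikhonov_residual_estimate
    {U Y : Type*} [NormedAddCommGroup U] [InnerProductSpace ℝ U] [CompleteSpace U]
    [NormedAddCommGroup Y] [InnerProductSpace ℝ Y] [CompleteSpace Y]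
    (S : U →L[ℝ] Y) (yd : Y) (C : Set U) (hne : C.Nonempty) (hcl : IsClosed C)
    (hconv : Convex ℝ C) (ubar : U) (hubar : ubar ∈ C)
    (hopt : ∀ v ∈ C, ‖S ubar - yd‖ ^ 2 ≤ ‖S v - yd‖ ^ 2)
    (w : Y) (hsource : IsProjOn C (ContinuousLinearMap.adjoint S w) ubar)
    (α : ℝ) (hα : 0 < α) (uα : U) (huα : uα ∈ C)
    (huαopt : ∀ v ∈ C, ‖S uα - yd‖ ^ 2 + α * ‖uα‖ ^ 2 ≤ ‖S v - yd‖ ^ 2 + α * ‖v‖ ^ 2) :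
    ‖S uα - yd‖ ≤ 2 * α * ‖w‖ + ‖S ubar - yd‖ :=
  tikhonov_residual_estimate_general S yd C ubar hubar w hsource α hα uα huα huαopt
end

section
/- Under the source condition ū = P_C(S*w) and optimality of ū over C, the following combined inequality holds for the Tikhonov minimizer u_α over C: ‖Su_α − y_d + αw‖² + α‖u_α − ū‖² ≤ ‖Sū − y_d + αw‖². -/
open scoped InnerProductSpace

theorem norm_add_smul_sq_add_mul_norm_sub_sq_eq
    {U Y : Type*} [NormedAddCommGroup U] [InnerProductSpace ℝ U]
    [NormedAddCommGroup Y] [InnerProductSpace ℝ Y]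
    (S : U →L[ℝ] Y) (yd w : Y) (α : ℝ) (u v : U) :
    ‖S u - yd + α • w‖ ^ 2 + α * ‖u - v‖ ^ 2 =
      ‖S v - yd + α • w‖ ^ 2
        + ((‖S u - yd‖ ^ 2 + α * ‖u‖ ^ 2) - (‖S v - yd‖ ^ 2 + α * ‖v‖ ^ 2))
        + 2 * α * (⟪w, S (u - v)⟫_ℝ - ⟪v, u - v⟫_ℝ) := by
  have hSuv : S u - yd = (S v - yd) + S (u - v) := by rw [map_sub]; abel
  have huv : u = v + (u - v) := by abel
  rw [hSuv, huv, add_sub_cancel_left]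
  simp only [norm_add_sq_real, inner_add_right, inner_smul_right, norm_smul,
    mul_pow, Real.norm_eq_abs, sq_abs, real_inner_comm w]
  ring

theorem tikhonov_combined_inequality_general
    {U Y : Type*} [NormedAddCommGroup U] [InnerProductSpace ℝ U] [CompleteSpace U]
    [NormedAddCommGroup Y] [InnerProductSpace ℝ Y] [CompleteSpace Y]
    (S : U →L[ℝ] Y) (yd : Y) (C : Set U)
    (ubar : U)
    (w : Y) (hsource : IsProjOn C (ContinuousLinearMap.adjoint S w) ubar)
    (α : ℝ) (hα : 0 < α) (uα : U) (huα : uα ∈ C)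
    (huαopt : ∀ v ∈ C, ‖S uα - yd‖ ^ 2 + α * ‖uα‖ ^ 2 ≤ ‖S v - yd‖ ^ 2 + α * ‖v‖ ^ 2) :
    ‖S uα - yd + α • w‖ ^ 2 + α * ‖uα - ubar‖ ^ 2 ≤ ‖S ubar - yd + α • w‖ ^ 2 := by
  have hgain := huαopt ubar hsource.1
  have hproj : ⟪w, S (uα - ubar)⟫_ℝ - ⟪ubar, uα - ubar⟫_ℝ ≤ 0 := by
    simpa only [inner_sub_left, ContinuousLinearMap.adjoint_inner_left] using hsource.2 uα huα
  rw [norm_add_smul_sq_add_mul_norm_sub_sq_eq S yd w α uα ubar]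
  linarith [mul_nonpos_of_nonneg_of_nonpos hα.le hproj]

/-- Under the source condition `ū = P_C(S*w)` and optimality of `ū` over `C`,
the Tikhonov minimizer `u_α` over `C` satisfies the combined inequality
`‖Su_α − y_d + αw‖² + α‖u_α − ū‖² ≤ ‖Sū − y_d + αw‖²`. -/
theorem tikhonov_combined_inequality
    {U Y : Type*} [NormedAddCommGroup U] [InnerProductSpace ℝ U] [CompleteSpace U]
    [NormedAddCommGroup Y] [InnerProductSpace ℝ Y] [CompleteSpace Y]
    (S : U →L[ℝ] Y) (yd : Y) (C : Set U) (hne : C.Nonempty) (hcl : IsClosed C)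
    (hconv : Convex ℝ C) (ubar : U) (hubar : ubar ∈ C)
    (hopt : ∀ v ∈ C, ‖S ubar - yd‖ ^ 2 ≤ ‖S v - yd‖ ^ 2)
    (w : Y) (hsource : IsProjOn C (ContinuousLinearMap.adjoint S w) ubar)
    (α : ℝ) (hα : 0 < α) (uα : U) (huα : uα ∈ C)
    (huαopt : ∀ v ∈ C, ‖S uα - yd‖ ^ 2 + α * ‖uα‖ ^ 2 ≤ ‖S v - yd‖ ^ 2 + α * ‖v‖ ^ 2) :
    ‖S uα - yd + α • w‖ ^ 2 + α * ‖uα - ubar‖ ^ 2 ≤ ‖S ubar - yd + α • w‖ ^ 2 :=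
  tikhonov_combined_inequality_general S yd C ubar w hsource α hα uα huα huαopt
end

section
/- Let U, Y be Hilbert spaces, S : U → Y bounded linear, C ⊆ U nonempty closed convex, ū ∈ C with Sū = y_d and ū = P_C(S*w) for some w ∈ Y. For δ > 0 let y^δ ∈ Y with ‖y^δ − y_d‖ ≤ δ, and let u_α^δ minimize ‖Su − y^δ‖² + α‖u‖² over C (α > 0). Then ‖u_α^δ − ū‖ ≤ √α‖w‖ + δ/√α and ‖Su_α^δ − y_d‖ ≤ 2α‖w‖ + δ. -/
open scoped RealInnerProductSpace

section Tikhonov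

variable {E F : Type*} [NormedAddCommGroup E] [InnerProductSpace ℝ E]
  [NormedAddCommGroup F] [InnerProductSpace ℝ F]

theorem hasFDerivAt_tikhonov (S : E →L[ℝ] F) (y : F) (α : ℝ) (u : E) :
    HasFDerivAt (fun v ↦ ‖S v - y‖ ^ 2 + α * ‖v‖ ^ 2)
      (2 • (innerSL ℝ (S u - y)).comp S + (2 * α) • innerSL ℝ u) u := by
  have hres : HasFDerivAt (fun v ↦ S v - y) S u := S.hasFDerivAt.sub_const y
  have hreg : HasFDerivAt (fun v ↦ α * ‖v‖ ^ 2) (α • 2 • innerSL ℝ u) u :=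
    (hasStrictFDerivAt_norm_sq u).hasFDerivAt.const_mul α
  refine (hres.norm_sq.add hreg).congr_fderiv ?_
  ext h
  simp only [add_apply, smul_apply, ContinuousLinearMap.comp_apply, coe_innerSL_apply,
    nsmul_eq_mul, Nat.cast_ofNat, smul_eq_mul]
  ring

theorem tikhonov_inner_nonneg_of_isMinOn (S : E →L[ℝ] F) (y : F) (α : ℝ) {C : Set E}
    (hC : Convex ℝ C) {u v : E} (hu : u ∈ C) (hv : v ∈ C)
    (hmin : IsMinOn (fun v ↦ ‖S v - y‖ ^ 2 + α * ‖v‖ ^ 2) C u) :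
    0 ≤ ⟪S u - y, S (v - u)⟫ + α * ⟪u, v - u⟫ := by
  have hcone : v - u ∈ posTangentConeAt C u :=
    sub_mem_posTangentConeAt_of_segment_subset (hC.segment_subset hu hv)
  have h := hmin.localize.hasFDerivWithinAt_nonneg
    (hasFDerivAt_tikhonov S y α u).hasFDerivWithinAt hcone
  simp only [add_apply, smul_apply, ContinuousLinearMap.comp_apply, coe_innerSL_apply,
    nsmul_eq_mul, Nat.cast_ofNat, smul_eq_mul] at h
  linarith

theorem tikhonov_error_sq_le [CompleteSpace E] [CompleteSpace F] (S : E →L[ℝ] F) {C : Set E}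
    (hC : Convex ℝ C) {ubar u : E} {w yd yδ : F} {α : ℝ} (hα : 0 ≤ α) (hubar : ubar ∈ C)
    (hattain : S ubar = yd) (hsource : IsProjOn C (ContinuousLinearMap.adjoint S w) ubar)
    (hu : u ∈ C) (hmin : IsMinOn (fun v ↦ ‖S v - yδ‖ ^ 2 + α * ‖v‖ ^ 2) C u) :
    ‖S u - yd‖ ^ 2 + α * ‖u - ubar‖ ^ 2 ≤ ⟪yδ - yd - α • w, S u - yd⟫ := by
  have hopt := tikhonov_inner_nonneg_of_isMinOn S yδ α hC hu hubar hmin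
  have hsrc : ⟪w, S u - yd⟫ ≤ ⟪ubar, u - ubar⟫ := by
    have h := hsource.2 u hu
    rwa [inner_sub_left, ContinuousLinearMap.adjoint_inner_left, map_sub, hattain,
      sub_nonpos] at h
  have hfit : ⟪S u - yδ, S (ubar - u)⟫ = -‖S u - yd‖ ^ 2 + ⟪yδ - yd, S u - yd⟫ := by
    rw [show S u - yδ = (S u - yd) - (yδ - yd) by abel, ← neg_sub u ubar, map_neg, map_sub,
      hattain, inner_neg_right, inner_sub_left, real_inner_self_eq_norm_sq]
    ring
  have hreg : ⟪u, ubar - u⟫ = -‖u - ubar‖ ^ 2 - ⟪ubar, u - ubar⟫ := by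
    rw [← neg_sub u ubar, inner_neg_right, ← real_inner_self_eq_norm_sq, inner_sub_left]
    ring
  rw [hfit, hreg] at hopt
  rw [inner_sub_left, real_inner_smul_left]
  nlinarith [mul_le_mul_of_nonneg_left hsrc hα]

end Tikhonov

theorem le_and_sqrt_mul_le_of_sq_add_mul_sq_le_mul {a b c α : ℝ} (hc : 0 ≤ c)
    (hα : 0 ≤ α) (h : a ^ 2 + α * b ^ 2 ≤ c * a) : a ≤ c ∧ √α * b ≤ c := by
  have hsq : √α ^ 2 = α := Real.sq_sqrt hα
  constructor
  · nlinarith [mul_nonneg hα (sq_nonneg b)]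
  · nlinarith [sq_nonneg (2 * a - c), Real.sqrt_nonneg α]

theorem tikhonov_noisy_error_estimates_general
    {U Y : Type*} [NormedAddCommGroup U] [InnerProductSpace ℝ U] [CompleteSpace U]
    [NormedAddCommGroup Y] [InnerProductSpace ℝ Y] [CompleteSpace Y]
    (S : U →L[ℝ] Y) (yd : Y) (C : Set U)
    (hconv : Convex ℝ C) (ubar : U) (hubar : ubar ∈ C) (hattain : S ubar = yd)
    (w : Y) (hsource : IsProjOn C (ContinuousLinearMap.adjoint S w) ubar)
    (δ : ℝ) (yδ : Y) (hnoise : ‖yδ - yd‖ ≤ δ)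
    (α : ℝ) (hα : 0 < α) (uαδ : U) (huαδ : uαδ ∈ C)
    (hopt : ∀ v ∈ C, ‖S uαδ - yδ‖ ^ 2 + α * ‖uαδ‖ ^ 2 ≤ ‖S v - yδ‖ ^ 2 + α * ‖v‖ ^ 2) :
    ‖uαδ - ubar‖ ≤ Real.sqrt α * ‖w‖ + δ / Real.sqrt α ∧
      ‖S uαδ - yd‖ ≤ 2 * α * ‖w‖ + δ := by
  have hkey := tikhonov_error_sq_le S hconv hα.le hubar hattain hsource huαδ (isMinOn_iff.2 hopt)
  have hcs : ⟪yδ - yd - α • w, S uαδ - yd⟫ ≤ (δ + α * ‖w‖) * ‖S uαδ - yd‖ := by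
    refine (real_inner_le_norm _ _).trans (mul_le_mul_of_nonneg_right ?_ (norm_nonneg _))
    calc ‖yδ - yd - α • w‖ ≤ ‖yδ - yd‖ + ‖α • w‖ := norm_sub_le _ _
      _ ≤ δ + α * ‖w‖ := by rw [norm_smul, Real.norm_of_nonneg hα.le]; linarith
  have hδ : 0 ≤ δ := (norm_nonneg _).trans hnoise
  have hαw : 0 ≤ α * ‖w‖ := by positivity
  obtain ⟨hresidual, hdist⟩ :=
    le_and_sqrt_mul_le_of_sq_add_mul_sq_le_mul (by positivity) hα.le (hkey.trans hcs)
  have hsqrt : 0 < √α := Real.sqrt_pos.2 hα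
  refine ⟨?_, by linarith⟩
  calc ‖uαδ - ubar‖ ≤ (δ + α * ‖w‖) / √α := by rwa [le_div_iff₀' hsqrt]
    _ = √α * ‖w‖ + δ / √α := by
      field_simp; rw [Real.sq_sqrt hα.le]; ring

/-- Noisy-data Tikhonov error estimates: if `ū ∈ C` satisfies `Sū = y_d`
and the source condition `ū = P_C(S*w)`, `‖y^δ − y_d‖ ≤ δ`, and `u_α^δ` minimizes
`‖Su − y^δ‖² + α‖u‖²` over `C` for `α > 0`, then `‖u_α^δ − ū‖ ≤ √α‖w‖ + δ/√α` and
`‖Su_α^δ − y_d‖ ≤ 2α‖w‖ + δ`. -/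
theorem tikhonov_noisy_error_estimates
    {U Y : Type*} [NormedAddCommGroup U] [InnerProductSpace ℝ U] [CompleteSpace U]
    [NormedAddCommGroup Y] [InnerProductSpace ℝ Y] [CompleteSpace Y]
    (S : U →L[ℝ] Y) (yd : Y) (C : Set U) (hne : C.Nonempty) (hcl : IsClosed C)
    (hconv : Convex ℝ C) (ubar : U) (hubar : ubar ∈ C) (hattain : S ubar = yd)
    (w : Y) (hsource : IsProjOn C (ContinuousLinearMap.adjoint S w) ubar)
    (δ : ℝ) (hδ : 0 < δ) (yδ : Y) (hnoise : ‖yδ - yd‖ ≤ δ)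
    (α : ℝ) (hα : 0 < α) (uαδ : U) (huαδ : uαδ ∈ C)
    (hopt : ∀ v ∈ C, ‖S uαδ - yδ‖ ^ 2 + α * ‖uαδ‖ ^ 2 ≤ ‖S v - yδ‖ ^ 2 + α * ‖v‖ ^ 2) :
    ‖uαδ - ubar‖ ≤ Real.sqrt α * ‖w‖ + δ / Real.sqrt α ∧
      ‖S uαδ - yd‖ ≤ 2 * α * ‖w‖ + δ :=
  tikhonov_noisy_error_estimates_general S yd C hconv ubar hubar hattain w hsource δ yδ hnoise α hα
    uαδ huαδ hopt
end

section
/- Converse source-condition result: Let u_α denote the Tikhonov minimizer over the closed convex set U_ad of ‖Su − y_d‖² + α‖u‖². Assume u_α ⇀ ū weakly in U as α → 0 and ‖Su_α − y_d‖ = O(α). Assume furthermore that weak convergence y_n ⇀ y in Y implies S*y_n → S*y strongly in U. Then there exists w ∈ Y such that ū = P_{U_ad}(S*w). -/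
/-!
The first-order optimality condition of the Tikhonov problem reads `u_α = P(S* w_α)` with
`w_α = -(S u_α - y_d) / α`, and the rate `‖S u_α - y_d‖ = O(α)` says exactly that `w_α` stays
bounded. Along a sequence `α → 0`, a subsequence of `w_α` converges weakly to some `w`, so
`S* w_α → S* w` strongly. The projection is nonexpansive, hence `u_α` converges strongly along
that subsequence, necessarily to its weak limit `ū`, and the variational inequality passes to the
limit: `ū = P(S* w)`.
-/

open Filter Topology

theorem nonneg_of_forall_add_mul_nonneg {A B : ℝ} (h : ∀ t ∈ Set.Ioc (0 : ℝ) 1, 0 ≤ A + t * B) :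
    0 ≤ A := by
  have hlim : Tendsto (fun t => A + t * B) (𝓝[>] 0) (𝓝 A) := by
    refine ((continuous_const.add (continuous_id.mul continuous_const)).tendsto' 0 A ?_).mono_left
      nhdsWithin_le_nhds
    simp
  exact ge_of_tendsto hlim (eventually_of_mem (Ioc_mem_nhdsGT zero_lt_one) h)

section Tikhonov

variable {U Y : Type*} [NormedAddCommGroup U] [InnerProductSpace ℝ U]
  [NormedAddCommGroup Y] [InnerProductSpace ℝ Y] {S : U →L[ℝ] Y} {yd : Y} {C : Set U}
  {a : ℝ} {ua : U}

theorem tikhonov_variational_inequality (hC : Convex ℝ C) (hmem : ua ∈ C)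
    (hopt : ∀ v ∈ C, ‖S ua - yd‖ ^ 2 + a * ‖ua‖ ^ 2 ≤ ‖S v - yd‖ ^ 2 + a * ‖v‖ ^ 2)
    {v : U} (hv : v ∈ C) :
    0 ≤ inner ℝ (S ua - yd) (S (v - ua)) + a * inner ℝ ua (v - ua) := by
  refine nonneg_of_forall_add_mul_nonneg (B := (‖S (v - ua)‖ ^ 2 + a * ‖v - ua‖ ^ 2) / 2)
    fun t ht => ?_
  have hopt_t := hopt _ (hC.add_smul_sub_mem hmem hv (Set.Ioc_subset_Icc_self ht))
  rw [map_add, add_sub_right_comm, map_smul, norm_add_sq_real, norm_add_sq_real,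
    inner_smul_right, inner_smul_right, norm_smul, norm_smul, Real.norm_of_nonneg ht.1.le]
    at hopt_t
  refine nonneg_of_mul_nonneg_right (a := 2 * t) ?_ (by linarith [ht.1])
  nlinarith

theorem isProjOn_of_tikhonov_min [CompleteSpace U] [CompleteSpace Y] (hC : Convex ℝ C)
    (ha : 0 < a) (hmem : ua ∈ C)
    (hopt : ∀ v ∈ C, ‖S ua - yd‖ ^ 2 + a * ‖ua‖ ^ 2 ≤ ‖S v - yd‖ ^ 2 + a * ‖v‖ ^ 2) :
    IsProjOn C (ContinuousLinearMap.adjoint S (-a⁻¹ • (S ua - yd))) ua := by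
  refine ⟨hmem, fun v hv => ?_⟩
  have hvi := tikhonov_variational_inequality (S := S) hC hmem hopt hv
  have : inner ℝ (ContinuousLinearMap.adjoint S (-a⁻¹ • (S ua - yd)) - ua) (v - ua)
      = -a⁻¹ * (inner ℝ (S ua - yd) (S (v - ua)) + a * inner ℝ ua (v - ua)) := by
    rw [inner_sub_left, map_smul, inner_smul_left, ContinuousLinearMap.adjoint_inner_left]
    simp only [conj_trivial]
    field_simp
    ring
  rw [this]
  exact mul_nonpos_of_nonpos_of_nonneg (neg_nonpos.2 (inv_nonneg.2 ha.le)) hvi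

end Tikhonov

theorem exists_subseq_tendsto_inner {E : Type*} [NormedAddCommGroup E] [InnerProductSpace ℝ E]
    [CompleteSpace E] {x : ℕ → E} {C : ℝ} (hx : ∀ n, ‖x n‖ ≤ C) :
    ∃ (φ : ℕ → ℕ) (y : E), StrictMono φ ∧
      ∀ z, Tendsto (fun k => inner ℝ (x (φ k)) z) atTop (𝓝 (inner ℝ y z)) := by
  -- Sequential Banach–Alaoglu needs separability, so work in the closed span `K` of the
  -- sequence; since `x n ∈ K`, pairing with `z` is pairing with its orthogonal projection on `K`.
  set K := (Submodule.span ℝ (Set.range x)).topologicalClosure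
  have hxK (n : ℕ) : x n ∈ K :=
    Submodule.le_topologicalClosure _ (Submodule.subset_span (Set.mem_range_self n))
  have : TopologicalSpace.SeparableSpace K :=
    ((TopologicalSpace.IsSeparable.span (Set.countable_range x).isSeparable).closure).separableSpace
  have : CompleteSpace K := (Submodule.isClosed_topologicalClosure _).completeSpace_coe
  let f (n : ℕ) : WeakDual ℝ K :=
    StrongDual.toWeakDual (InnerProductSpace.toDual ℝ K ⟨x n, hxK n⟩)
  have hf (n : ℕ) : f n ∈ WeakDual.toStrongDual ⁻¹' Metric.closedBall 0 C := by
    rw [Set.mem_preimage, Metric.mem_closedBall]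
    exact (dist_zero_right _).trans_le
      (((InnerProductSpace.toDual ℝ K).norm_map _).trans_le (hx n))
  obtain ⟨g, -, φ, hφ, hfg⟩ := WeakDual.isSeqCompact_closedBall ℝ K 0 C hf
  refine ⟨φ, (InnerProductSpace.toDual ℝ K).symm (WeakDual.toStrongDual g), hφ, fun z => ?_⟩
  have key := ((WeakDual.eval_continuous (K.orthogonalProjectionOnto z)).tendsto g).comp hfg
  rw [← Submodule.inner_orthogonalProjectionOnto_eq_of_mem_left,
    InnerProductSpace.toDual_symm_apply, WeakDual.toStrongDual_apply]
  simpa only [Function.comp_def, f, StrongDual.toWeakDual_apply,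
    InnerProductSpace.toDual_apply_apply,
    Submodule.inner_orthogonalProjectionOnto_eq_of_mem_left] using key

namespace IsProjOn

variable {U : Type*} [NormedAddCommGroup U] [InnerProductSpace ℝ U] {C : Set U}

theorem dist_le {x₁ x₂ p₁ p₂ : U} (h₁ : IsProjOn C x₁ p₁) (h₂ : IsProjOn C x₂ p₂) :
    dist p₁ p₂ ≤ dist x₁ x₂ := by
  rw [dist_eq_norm, dist_eq_norm]
  have hsum : inner ℝ (x₁ - p₁) (p₂ - p₁) + inner ℝ (x₂ - p₂) (p₁ - p₂) ≤ (0 : ℝ) :=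
    add_nonpos (h₁.2 p₂ h₂.1) (h₂.2 p₁ h₁.1)
  have hsq : ‖p₁ - p₂‖ ^ 2 ≤ ‖x₁ - x₂‖ * ‖p₁ - p₂‖ :=
    calc ‖p₁ - p₂‖ ^ 2 = inner ℝ (p₁ - p₂) (p₁ - p₂) := (real_inner_self_eq_norm_sq _).symm
      _ ≤ inner ℝ (x₁ - x₂) (p₁ - p₂) := by
        rw [← neg_sub p₁ p₂, inner_neg_right] at hsum
        simp only [inner_sub_left] at hsum ⊢
        linarith
      _ ≤ ‖x₁ - x₂‖ * ‖p₁ - p₂‖ := real_inner_le_norm _ _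
  nlinarith [norm_nonneg (p₁ - p₂), norm_nonneg (x₁ - x₂)]

theorem of_tendsto {ι : Type*} {l : Filter ι} [l.NeBot] (hC : IsClosed C) {x p : ι → U}
    {x₀ p₀ : U} (h : ∀ i, IsProjOn C (x i) (p i)) (hx : Tendsto x l (𝓝 x₀))
    (hp : Tendsto p l (𝓝 p₀)) : IsProjOn C x₀ p₀ :=
  ⟨hC.mem_of_tendsto hp (Eventually.of_forall fun i => (h i).1), fun v hv =>
    le_of_tendsto ((hx.sub hp).inner (tendsto_const_nhds.sub hp))
      (Eventually.of_forall fun i => (h i).2 v hv)⟩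

theorem cauchySeq {x p : ℕ → U} (h : ∀ n, IsProjOn C (x n) (p n)) (hx : CauchySeq x) :
    CauchySeq p :=
  Metric.cauchySeq_iff.2 fun ε hε => (Metric.cauchySeq_iff.1 hx ε hε).imp fun _ hN m hm n hn =>
    ((h m).dist_le (h n)).trans_lt (hN m hm n hn)

theorem exists_tendsto_of_tendsto [CompleteSpace U] (hC : IsClosed C) {x p : ℕ → U} {x₀ : U}
    (h : ∀ n, IsProjOn C (x n) (p n)) (hx : Tendsto x atTop (𝓝 x₀)) :
    ∃ p₀, Tendsto p atTop (𝓝 p₀) ∧ IsProjOn C x₀ p₀ :=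
  (cauchySeq_tendsto_of_complete (cauchySeq h hx.cauchySeq)).imp fun _ hp =>
    ⟨hp, of_tendsto hC h hx hp⟩

end IsProjOn

theorem eq_of_tendsto_of_tendsto_inner {E ι : Type*} [NormedAddCommGroup E]
    [InnerProductSpace ℝ E] {l : Filter ι} [l.NeBot] {x : ι → E} {p q : E}
    (hp : Tendsto x l (𝓝 p)) (hq : ∀ z, Tendsto (fun i => inner ℝ (x i) z) l (𝓝 (inner ℝ q z))) :
    q = p :=
  ext_inner_right ℝ fun z => tendsto_nhds_unique (hq z) (hp.inner tendsto_const_nhds)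

theorem converse_source_condition_general
    {U Y : Type*} [NormedAddCommGroup U] [InnerProductSpace ℝ U] [CompleteSpace U]
    [NormedAddCommGroup Y] [InnerProductSpace ℝ Y] [CompleteSpace Y]
    (S : U →L[ℝ] Y) (yd : Y) (Uad : Set U)
    (hcl : IsClosed Uad) (hconv : Convex ℝ Uad)
    (u : ℝ → U) (humem : ∀ a > (0 : ℝ), u a ∈ Uad)
    (hopt : ∀ a > (0 : ℝ), ∀ v ∈ Uad,
      ‖S (u a) - yd‖ ^ 2 + a * ‖u a‖ ^ 2 ≤ ‖S v - yd‖ ^ 2 + a * ‖v‖ ^ 2)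
    (ubar : U)
    (hweak : ∀ z : U, Tendsto (fun a => (inner ℝ (u a) z : ℝ)) (𝓝[>] 0)
      (𝓝 (inner ℝ ubar z : ℝ)))
    (c : ℝ) (hrate : ∀ᶠ a in 𝓝[>] (0 : ℝ), ‖S (u a) - yd‖ ≤ c * a)
    (hSstar : ∀ (y : ℕ → Y) (ylim : Y),
      (∀ z : Y, Tendsto (fun n => (inner ℝ (y n) z : ℝ)) atTop (𝓝 (inner ℝ ylim z : ℝ))) →
      Tendsto (fun n => ContinuousLinearMap.adjoint S (y n)) atTop
        (𝓝 (ContinuousLinearMap.adjoint S ylim))) :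
    ∃ w : Y, IsProjOn Uad (ContinuousLinearMap.adjoint S w) ubar := by
  obtain ⟨a, ha, hrate_a⟩ :=
    exists_seq_forall_of_frequently (hrate.and self_mem_nhdsWithin).frequently
  set w : ℕ → Y := fun n => -(a n)⁻¹ • (S (u (a n)) - yd)
  have hw_bound (n : ℕ) : ‖w n‖ ≤ c := by
    obtain ⟨hn, hpos : 0 < a n⟩ := hrate_a n
    rw [norm_smul, norm_neg, norm_inv, Real.norm_of_nonneg hpos.le, inv_mul_le_iff₀ hpos, mul_comm]
    exact hn
  have hproj (n : ℕ) : IsProjOn Uad (ContinuousLinearMap.adjoint S (w n)) (u (a n)) :=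
    have hpos : 0 < a n := (hrate_a n).2
    isProjOn_of_tikhonov_min hconv hpos (humem _ hpos) (hopt _ hpos)
  obtain ⟨φ, wlim, hφ, hw_weak⟩ := exists_subseq_tendsto_inner hw_bound
  obtain ⟨p, hp, hproj_p⟩ :=
    IsProjOn.exists_tendsto_of_tendsto hcl (fun k => hproj (φ k)) (hSstar _ wlim hw_weak)
  have hubar : ubar = p :=
    eq_of_tendsto_of_tendsto_inner hp fun z => ((hweak z).comp ha).comp hφ.tendsto_atTop
  exact ⟨wlim, hubar ▸ hproj_p⟩

/-- Converse source-condition result. Let `u_α` be the Tikhonov minimizer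
over the nonempty closed convex set `U_ad` of `‖Su − y_d‖² + α‖u‖²`. If `u_α ⇀ ū` weakly
as `α → 0`, `‖Su_α − y_d‖ = O(α)`, and `S*` maps weakly convergent sequences in `Y` to
strongly convergent sequences in `U`, then there exists `w ∈ Y` with `ū = P_{U_ad}(S*w)`. -/
theorem converse_source_condition
    {U Y : Type*} [NormedAddCommGroup U] [InnerProductSpace ℝ U] [CompleteSpace U]
    [NormedAddCommGroup Y] [InnerProductSpace ℝ Y] [CompleteSpace Y]
    (S : U →L[ℝ] Y) (yd : Y) (Uad : Set U) (hne : Uad.Nonempty)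
    (hcl : IsClosed Uad) (hconv : Convex ℝ Uad)
    (u : ℝ → U) (humem : ∀ a > (0 : ℝ), u a ∈ Uad)
    (hopt : ∀ a > (0 : ℝ), ∀ v ∈ Uad,
      ‖S (u a) - yd‖ ^ 2 + a * ‖u a‖ ^ 2 ≤ ‖S v - yd‖ ^ 2 + a * ‖v‖ ^ 2)
    (ubar : U)
    (hweak : ∀ z : U, Tendsto (fun a => (inner ℝ (u a) z : ℝ)) (𝓝[>] 0)
      (𝓝 (inner ℝ ubar z : ℝ)))
    (c : ℝ) (hrate : ∀ᶠ a in 𝓝[>] (0 : ℝ), ‖S (u a) - yd‖ ≤ c * a)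
    (hSstar : ∀ (y : ℕ → Y) (ylim : Y),
      (∀ z : Y, Tendsto (fun n => (inner ℝ (y n) z : ℝ)) atTop (𝓝 (inner ℝ ylim z : ℝ))) →
      Tendsto (fun n => ContinuousLinearMap.adjoint S (y n)) atTop
        (𝓝 (ContinuousLinearMap.adjoint S ylim))) :
    ∃ w : Y, IsProjOn Uad (ContinuousLinearMap.adjoint S w) ubar :=
  converse_source_condition_general S yd Uad hcl hconv u humem hopt ubar hweak c hrate hSstar
end

section
/- Total error estimate for joint Tikhonov–Lavrentiev regularization: under the assumptions that ū solves the constrained problem with all constraints strictly inactive (τ < ū < b − τ, Sū < ψ − τ), the source condition ū = S*w holds, and S satisfies the regularity implications (L² → L^∞ on D' for S, weak-Y → L^∞ on D for S*), for λ small enough the solution u_α^λ of the jointly regularized problem satisfies ‖ū − u_α^λ‖ = O(√α) as α → 0. -/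
/-! For small `λ`, the strict inactivity of the state constraint at `ū`, together with the `L^∞`
bound on `ū = S* w` coming from the regularity of `S*`, makes `ū` admissible for the Lavrentiev
problem, while `U_ad^λ ⊆ U_ad^0`. Hence `ū` minimizes the unregularized misfit over the convex set
`U_ad^0 ∋ u_α^λ`, and the first-order condition `⟪Sū - y_d, S u_α^λ - Sū⟫ ≥ 0`, the optimality of
`u_α^λ` tested with `ū`, and the source condition give `‖ū - u_α^λ‖² ≤ α ‖w‖²`. -/

open MeasureTheory Filter Topology

section Hilbert

variable {H Y : Type*} [NormedAddCommGroup H] [InnerProductSpace ℝ H]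
  [NormedAddCommGroup Y] [InnerProductSpace ℝ Y]

theorem inner_sub_nonneg_of_isMinOn_norm_sub_sq (S : H →L[ℝ] Y) {K : Set H} (hK : Convex ℝ K)
    {yd : Y} {u v : H} (hu : u ∈ K) (hv : v ∈ K)
    (hmin : IsMinOn (fun w => ‖S w - yd‖ ^ 2) K u) :
    0 ≤ inner ℝ (S u - yd) (S v - S u) := by
  have hderiv := ((S.hasFDerivAt (x := u)).sub_const yd).norm_sq.hasFDerivWithinAt (s := K)
  have hcone : v - u ∈ posTangentConeAt K u :=
    mem_posTangentConeAt_of_segment_subset (by simpa using hK.segment_subset hu hv)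
  have := hmin.localize.hasFDerivWithinAt_nonneg hderiv hcone
  rw [smul_apply, ContinuousLinearMap.comp_apply, innerSL_apply_apply, map_sub, nsmul_eq_mul,
    Nat.cast_ofNat] at this
  linarith

variable [CompleteSpace H] [CompleteSpace Y]

theorem norm_sub_le_sqrt_mul_norm_of_source (S : H →L[ℝ] Y) {yd w : Y} {ubar ua : H} {a : ℝ}
    (ha : 0 < a) (hsource : ubar = ContinuousLinearMap.adjoint S w)
    (hvar : 0 ≤ inner ℝ (S ubar - yd) (S ua - S ubar))
    (hopt : ‖S ua - yd‖ ^ 2 + a * ‖ua‖ ^ 2 ≤ ‖S ubar - yd‖ ^ 2 + a * ‖ubar‖ ^ 2) :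
    ‖ubar - ua‖ ≤ Real.sqrt a * ‖w‖ := by
  set d := S ua - S ubar
  have hfit : ‖S ua - yd‖ ^ 2 = ‖S ubar - yd‖ ^ 2 + 2 * inner ℝ (S ubar - yd) d + ‖d‖ ^ 2 := by
    rw [← norm_add_sq_real, sub_add_sub_cancel']
  have hsrc : inner ℝ ubar (ubar - ua) = - inner ℝ w d := by
    rw [← inner_neg_right, neg_sub, ← map_sub, ← ContinuousLinearMap.adjoint_inner_left, ← hsource]
  have hexpand : ‖ubar - ua‖ ^ 2 = ‖ua‖ ^ 2 - ‖ubar‖ ^ 2 + 2 * inner ℝ ubar (ubar - ua) := by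
    rw [norm_sub_sq_real, inner_sub_right, real_inner_self_eq_norm_sq]; ring
  have hcs : - inner ℝ w d ≤ ‖w‖ * ‖d‖ := (neg_le_abs _).trans (abs_real_inner_le_norm w d)
  -- `a ‖ubar - ua‖² ≤ 2a‖w‖‖d‖ - ‖d‖² ≤ a²‖w‖²`
  have key : a * ‖ubar - ua‖ ^ 2 ≤ a * (a * ‖w‖ ^ 2) := by
    nlinarith [sq_nonneg (‖d‖ - a * ‖w‖)]
  have hsq : ‖ubar - ua‖ ^ 2 ≤ (Real.sqrt a * ‖w‖) ^ 2 := by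
    rw [mul_pow, Real.sq_sqrt ha.le]; exact le_of_mul_le_mul_left key ha
  exact (sq_le_sq₀ (norm_nonneg _) (by positivity)).mp hsq

end Hilbert

theorem eLpNormEssSup_apply_ne_top_of_tendsto_weak
    {H E α : Type*} [NormedAddCommGroup H] [InnerProductSpace ℝ H]
    [NormedAddCommGroup E] [NormedSpace ℝ E] [MeasurableSpace α] {μ : Measure α}
    {p : ENNReal} [Fact (1 ≤ p)] (T : H →L[ℝ] Lp E p μ)
    (hT : ∀ (y : ℕ → H) (ylim : H),
      (∀ z : H, Tendsto (fun n => (inner ℝ (y n) z : ℝ)) atTop (𝓝 (inner ℝ ylim z : ℝ))) →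
      Tendsto (fun n => eLpNormEssSup (fun x => T (y n) x - T ylim x) μ) atTop (𝓝 0))
    (w : H) : eLpNormEssSup (T w) μ ≠ ⊤ := by
  set c : ℕ → ℝ := fun n => ((n : ℝ) + 1)⁻¹
  have hc : Tendsto c atTop (𝓝 0) := tendsto_one_div_add_atTop_nhds_zero_nat.congr (by simp [c])
  have hweak (z : H) : Tendsto (fun n => inner ℝ (c n • w) z) atTop (𝓝 (inner ℝ (0 : H) z)) := by
    simpa [real_inner_smul_left] using hc.mul_const (inner ℝ w z)
  have hscale (n : ℕ) : (fun x => T (c n • w) x - T 0 x) =ᵐ[μ] c n • ⇑(T w) := by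
    filter_upwards [Lp.coeFn_smul (c n) (T w), Lp.coeFn_zero E p μ] with x hsmul hzero
    rw [map_smul, map_zero, hsmul, hzero, Pi.zero_apply, sub_zero]
  obtain ⟨n, hn⟩ := ((hT _ 0 hweak).eventually (gt_mem_nhds ENNReal.zero_lt_top)).exists
  rw [eLpNormEssSup_congr_ae (hscale n), eLpNormEssSup_const_smul] at hn
  exact fun htop => hn.ne (by rw [htop, ENNReal.mul_top (enorm_ne_zero.mpr (by positivity))])

theorem Lp.coeFn_smul_add_smul {α E : Type*} [MeasurableSpace α] {μ : Measure α}
    [NormedAddCommGroup E] [NormedSpace ℝ E] {p : ENNReal} (s t : ℝ) (f g : Lp E p μ) :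
    ⇑(s • f + t • g) =ᵐ[μ] fun x => s • f x + t • g x := by
  filter_upwards [Lp.coeFn_add (s • f) (t • g), Lp.coeFn_smul s f, Lp.coeFn_smul t g]
    with x hadd hf hg
  rw [hadd, Pi.add_apply, hf, hg, Pi.smul_apply, Pi.smul_apply]

section Admissible

variable {α : Type*} [MeasurableSpace α] (μ : Measure α) (D : Set α)
  (S : Lp ℝ 2 μ →L[ℝ] Lp ℝ 2 μ) (b ψ : α → ℝ)

def lavrentievAdmissibleSet (lam : ℝ) : Set (Lp ℝ 2 μ) :=
  {u | (∀ᵐ x ∂μ, 0 ≤ u x ∧ u x ≤ b x) ∧ ∀ᵐ x ∂μ, x ∈ D → lam * u x + S u x ≤ ψ x}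

theorem convex_lavrentievAdmissibleSet (lam : ℝ) :
    Convex ℝ (lavrentievAdmissibleSet μ D S b ψ lam) := by
  rintro u ⟨hu_box, hu_state⟩ v ⟨hv_box, hv_state⟩ s t hs ht hst
  have hS : S (s • u + t • v) = s • S u + t • S v := by rw [map_add, map_smul, map_smul]
  refine ⟨?_, ?_⟩
  · filter_upwards [Lp.coeFn_smul_add_smul s t u v, hu_box, hv_box] with x hx hux hvx
    rw [hx, smul_eq_mul, smul_eq_mul]
    constructor <;> nlinarith
  · filter_upwards [Lp.coeFn_smul_add_smul s t u v, Lp.coeFn_smul_add_smul s t (S u) (S v),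
      hu_state, hv_state] with x hx hSx hux hvx hxD
    rw [hS, hSx, hx, smul_eq_mul, smul_eq_mul, smul_eq_mul, smul_eq_mul]
    linear_combination s * hux hxD + t * hvx hxD + ψ x * hst

theorem lavrentievAdmissibleSet_antitone : Antitone (lavrentievAdmissibleSet μ D S b ψ) := by
  intro lam lam' hlam u ⟨hu_box, hu_state⟩
  refine ⟨hu_box, ?_⟩
  filter_upwards [hu_box, hu_state] with x hux hx hxD
  nlinarith [hx hxD, hux.1]

variable {μ D S b ψ} in
theorem mem_lavrentievAdmissibleSet_of_strict {u : Lp ℝ 2 μ} {B τ lam : ℝ}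
    (hu : u ∈ lavrentievAdmissibleSet μ D S b ψ 0) (hB : ∀ᵐ x ∂μ, u x ≤ B)
    (hstrict : ∀ᵐ x ∂μ, x ∈ D → S u x < ψ x - τ) (hlam : 0 ≤ lam) (hlamB : lam * B ≤ τ) :
    u ∈ lavrentievAdmissibleSet μ D S b ψ lam := by
  refine ⟨hu.1, ?_⟩
  filter_upwards [hB, hstrict] with x hux hx hxD
  nlinarith [hx hxD, mul_le_mul_of_nonneg_left hux hlam]

end Admissible

theorem joint_tikhonov_lavrentiev_total_error_general
    {α' : Type*} [MeasurableSpace α'] (μ : Measure α') (D' : Set α')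
    (S : Lp ℝ 2 μ →L[ℝ] Lp ℝ 2 μ)
    (b ψ : α' → ℝ) (yd : Lp ℝ 2 μ)
    (Uad : ℝ → Set (Lp ℝ 2 μ))
    (hUad : ∀ lam : ℝ, Uad lam = {u : Lp ℝ 2 μ | (∀ᵐ x ∂μ, 0 ≤ u x ∧ u x ≤ b x) ∧
      ∀ᵐ x ∂μ, x ∈ D' → lam * u x + S u x ≤ ψ x})
    (ubar : Lp ℝ 2 μ) (hmem : ubar ∈ Uad 0)
    (hopt : ∀ v ∈ Uad 0, ‖S ubar - yd‖ ^ 2 ≤ ‖S v - yd‖ ^ 2)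
    (τ : ℝ) (hτ : 0 < τ)
    (hstrict_S : ∀ᵐ x ∂μ, x ∈ D' → S ubar x < ψ x - τ)
    (w : Lp ℝ 2 μ) (hsource : ubar = ContinuousLinearMap.adjoint S w)
    (hSstar : ∀ (y : ℕ → Lp ℝ 2 μ) (ylim : Lp ℝ 2 μ),
      (∀ z : Lp ℝ 2 μ, Tendsto (fun n => (inner ℝ (y n) z : ℝ)) atTop (𝓝 (inner ℝ ylim z : ℝ))) →
      Tendsto (fun n => eLpNormEssSup
          (fun x => ContinuousLinearMap.adjoint S (y n) x -
            ContinuousLinearMap.adjoint S ylim x) μ)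
        atTop (𝓝 0)) :
    ∃ lam₀ > (0 : ℝ), ∀ lam : ℝ, 0 < lam → lam < lam₀ →
      ∃ C > (0 : ℝ), ∃ α₀ > (0 : ℝ), ∀ a : ℝ, 0 < a → a < α₀ →
        ∀ ua : Lp ℝ 2 μ, ua ∈ Uad lam →
          (∀ v ∈ Uad lam, ‖S ua - yd‖ ^ 2 + a * ‖ua‖ ^ 2 ≤ ‖S v - yd‖ ^ 2 + a * ‖v‖ ^ 2) →
          ‖ubar - ua‖ ≤ C * Real.sqrt a := by
  obtain rfl : Uad = lavrentievAdmissibleSet μ D' S b ψ := funext hUad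
  have hbounded : eLpNormEssSup ubar μ ≠ ⊤ :=
    hsource ▸ eLpNormEssSup_apply_ne_top_of_tendsto_weak _ hSstar w
  set B := (eLpNormEssSup ubar μ).toReal
  have hB : ∀ᵐ x ∂μ, ubar x ≤ B := by
    filter_upwards [ae_le_eLpNormEssSup (f := ubar)] with x hx
    exact (le_abs_self _).trans (ENNReal.toReal_mono hbounded hx)
  refine ⟨τ / (B + 1), by positivity, fun lam hlam hlam_lt => ⟨‖w‖ + 1, by positivity, 1, one_pos,
    fun a ha _ ua hua hua_opt => ?_⟩⟩
  have hubar_lam : ubar ∈ lavrentievAdmissibleSet μ D' S b ψ lam :=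
    mem_lavrentievAdmissibleSet_of_strict hmem hB hstrict_S hlam.le
      (by rw [lt_div_iff₀ (by positivity)] at hlam_lt; nlinarith)
  have hua0 : ua ∈ lavrentievAdmissibleSet μ D' S b ψ 0 :=
    lavrentievAdmissibleSet_antitone μ D' S b ψ hlam.le hua
  have hvar := inner_sub_nonneg_of_isMinOn_norm_sub_sq S
    (convex_lavrentievAdmissibleSet μ D' S b ψ 0) hmem hua0 (isMinOn_iff.mpr hopt)
  calc ‖ubar - ua‖ ≤ Real.sqrt a * ‖w‖ :=
        norm_sub_le_sqrt_mul_norm_of_source S ha hsource hvar (hua_opt ubar hubar_lam)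
    _ ≤ (‖w‖ + 1) * Real.sqrt a := by nlinarith [Real.sqrt_nonneg a]

/-- Total error estimate for joint Tikhonov–Lavrentiev regularization.
Under strictly inactive constraints at `ū` (margin `τ`), the source condition
`ū = S*w`, and the regularity implications for `S` and `S*`, for every small enough
Lavrentiev parameter `λ > 0` the solutions `u_α^λ` of the jointly regularized problems
over `U_ad^λ = {0 ≤ u ≤ b, λu + Su ≤ ψ}` satisfy `‖ū − u_α^λ‖ = O(√α)` as `α → 0`. -/
theorem joint_tikhonov_lavrentiev_total_error
    {α' : Type*} [MeasurableSpace α'] (μ : Measure α') (D' : Set α')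
    (S : Lp ℝ 2 μ →L[ℝ] Lp ℝ 2 μ) (hdense : DenseRange S)
    (b ψ : α' → ℝ) (yd : Lp ℝ 2 μ)
    (Uad : ℝ → Set (Lp ℝ 2 μ))
    (hUad : ∀ lam : ℝ, Uad lam = {u : Lp ℝ 2 μ | (∀ᵐ x ∂μ, 0 ≤ u x ∧ u x ≤ b x) ∧
      ∀ᵐ x ∂μ, x ∈ D' → lam * u x + S u x ≤ ψ x})
    (ubar : Lp ℝ 2 μ) (hmem : ubar ∈ Uad 0)
    (hopt : ∀ v ∈ Uad 0, ‖S ubar - yd‖ ^ 2 ≤ ‖S v - yd‖ ^ 2)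
    (τ : ℝ) (hτ : 0 < τ)
    (hstrict_u : ∀ᵐ x ∂μ, τ < ubar x ∧ ubar x < b x - τ)
    (hstrict_S : ∀ᵐ x ∂μ, x ∈ D' → S ubar x < ψ x - τ)
    (w : Lp ℝ 2 μ) (hsource : ubar = ContinuousLinearMap.adjoint S w)
    (hS : ∀ (u : ℕ → Lp ℝ 2 μ) (ulim : Lp ℝ 2 μ), Tendsto u atTop (𝓝 ulim) →
      Tendsto (fun n => eLpNormEssSup (D'.indicator (fun x => S (u n) x - S ulim x)) μ)
        atTop (𝓝 0))
    (hSstar : ∀ (y : ℕ → Lp ℝ 2 μ) (ylim : Lp ℝ 2 μ),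
      (∀ z : Lp ℝ 2 μ, Tendsto (fun n => (inner ℝ (y n) z : ℝ)) atTop (𝓝 (inner ℝ ylim z : ℝ))) →
      Tendsto (fun n => eLpNormEssSup
          (fun x => ContinuousLinearMap.adjoint S (y n) x -
            ContinuousLinearMap.adjoint S ylim x) μ)
        atTop (𝓝 0)) :
    ∃ lam₀ > (0 : ℝ), ∀ lam : ℝ, 0 < lam → lam < lam₀ →
      ∃ C > (0 : ℝ), ∃ α₀ > (0 : ℝ), ∀ a : ℝ, 0 < a → a < α₀ →
        ∀ ua : Lp ℝ 2 μ, ua ∈ Uad lam →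
          (∀ v ∈ Uad lam, ‖S ua - yd‖ ^ 2 + a * ‖ua‖ ^ 2 ≤ ‖S v - yd‖ ^ 2 + a * ‖v‖ ^ 2) →
          ‖ubar - ua‖ ≤ C * Real.sqrt a :=
  joint_tikhonov_lavrentiev_total_error_general μ D' S b ψ yd Uad hUad ubar hmem hopt τ hτ hstrict_S
    w hsource hSstar
end
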